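/- Let X be a well partial order with height h(X) (the rank of the tree of strictly decreasing sequences). Then the height of the finite multisets over X under the multiset ordering equals ω^{h(X)}. -/

import Mathlib

open Ordinal

/-- Multiset embedding w.r.t. a relation `le`: `m ≤⋄ m'` iff there is an injection
from `m` into `m'` (respecting multiplicities) mapping each element to a larger one. -/
def MulEmb {X : Type*} (le : X → X → Prop) (m m' : Multiset X) : Prop :=
  ∃ t ≤ m', Multiset.Rel le m t

open scoped Classical in
/-- Dershowitz–Manna multiset ordering w.r.t. a strict relation `lt`. -/
def MulDM {X : Type*} (lt : X → X → Prop) (m m' : Multiset X) : Prop :=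
  m = m' ∨ ∀ x ∈ m - m ∩ m', ∃ y ∈ m' - m ∩ m', lt x y

/-- Well quasi order: every infinite sequence has an increasing pair. -/
def IsWqo {X : Type*} (le : X → X → Prop) : Prop :=
  ∀ f : ℕ → X, ∃ i j : ℕ, i < j ∧ le (f i) (f j)

open scoped Classical in
/-- The height of a well-founded relation: the rank of the empty decreasing
sequence, i.e. `sup_x (rank x + 1)`. (Junk value `0` if `r` is not well founded.) -/
noncomputable def heightOrd {X : Type*} (r : X → X → Prop) : Ordinal :=
  if h : WellFounded r then ⨆ x : X, Order.succ ((h.apply x).rank) else 0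


noncomputable def WellFounded.rank {α : Type u} {r : α → α → Prop} (hwf : WellFounded r) (a : α) :
    Ordinal.{u} :=
  (hwf.apply a).rank

theorem WellFounded.rank_eq {α : Type u} {r : α → α → Prop} (hwf : WellFounded r) {a : α} :
    hwf.rank a = ⨆ b : { b // r b a }, Order.succ (hwf.rank b) :=
  (hwf.apply a).rank_eq

theorem WellFounded.rank_lt_of_rel {α : Type u} {r : α → α → Prop} (hwf : WellFounded r)
    {a b : α} (h : r a b) : hwf.rank a < hwf.rank b :=
  Acc.rank_lt_of_rel _ h

set_option linter.deprecated false in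
set_option linter.unusedSectionVars false in
set_option maxHeartbeats 1000000 in
section
set_option linter.deprecated false
set_option linter.unusedSectionVars false
set_option maxHeartbeats 1000000

namespace Stmt15Aux

open scoped Classical

/-! ### Natural (Hessenberg) addition, rebuilt locally -/

noncomputable def naddF (p : Ordinal.{u} × Ordinal.{u})
    (IH : ∀ q, Prod.Lex (· < ·) (· < ·) q p → Ordinal.{u}) : Ordinal.{u} :=
  max (⨆ x : Set.Iio p.1, Order.succ (IH (x.1, p.2) (Prod.Lex.left _ _ x.2)))
    (⨆ y : Set.Iio p.2, Order.succ (IH (p.1, y.1) (Prod.Lex.right _ y.2)))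

theorem naddWf : WellFounded (Prod.Lex (α := Ordinal.{u}) (β := Ordinal.{u}) (· < ·) (· < ·)) :=
  WellFounded.prod_lex Ordinal.lt_wf Ordinal.lt_wf

noncomputable def nadd (a b : Ordinal.{u}) : Ordinal.{u} :=
  naddWf.fix naddF (a, b)

infixl:65 " ♯ " => nadd

theorem nadd_def (a b : Ordinal.{u}) : a ♯ b =
    max (⨆ x : Set.Iio a, Order.succ (x.1 ♯ b)) (⨆ y : Set.Iio b, Order.succ (a ♯ y.1)) := by
  unfold nadd
  rw [WellFounded.fix_eq]
  rfl

theorem lt_nadd_iff {a b c : Ordinal.{u}} :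
    a < b ♯ c ↔ (∃ b' < b, a ≤ b' ♯ c) ∨ ∃ c' < c, a ≤ b ♯ c' := by
  rw [nadd_def, lt_max_iff, Ordinal.lt_iSup_iff, Ordinal.lt_iSup_iff]
  simp only [Order.lt_succ_iff, Subtype.exists, Set.mem_Iio, exists_prop]

theorem nadd_le_iff {a b c : Ordinal.{u}} :
    b ♯ c ≤ a ↔ (∀ b' < b, b' ♯ c < a) ∧ ∀ c' < c, b ♯ c' < a := by
  rw [← not_lt, lt_nadd_iff]
  push_neg
  rfl

theorem nadd_lt_nadd_right {a b : Ordinal.{u}} (h : a < b) (c : Ordinal.{u}) : a ♯ c < b ♯ c :=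
  lt_nadd_iff.2 (Or.inl ⟨a, h, le_rfl⟩)

theorem nadd_lt_nadd_left {b c : Ordinal.{u}} (h : b < c) (a : Ordinal.{u}) : a ♯ b < a ♯ c :=
  lt_nadd_iff.2 (Or.inr ⟨b, h, le_rfl⟩)

theorem nadd_le_nadd_left {b c : Ordinal.{u}} (h : b ≤ c) (a : Ordinal.{u}) : a ♯ b ≤ a ♯ c := by
  rcases h.lt_or_eq with h | rfl
  · exact (nadd_lt_nadd_left h a).le
  · exact le_rfl

theorem nadd_le_nadd_right {a b : Ordinal.{u}} (h : a ≤ b) (c : Ordinal.{u}) : a ♯ c ≤ b ♯ c := by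
  rcases h.lt_or_eq with h | rfl
  · exact (nadd_lt_nadd_right h c).le
  · exact le_rfl

theorem nadd_comm (a b : Ordinal.{u}) : a ♯ b = b ♯ a := by
  induction a using Ordinal.induction generalizing b with
  | h a IHa =>
  induction b using Ordinal.induction with
  | h b IHb =>
  apply le_antisymm
  · rw [nadd_le_iff]
    constructor
    · intro a' ha'
      rw [IHa a' ha' b]
      exact nadd_lt_nadd_left ha' b
    · intro b' hb'
      rw [IHb b' hb']
      exact nadd_lt_nadd_right hb' a
  · rw [nadd_le_iff]
    constructor
    · intro b' hb'
      rw [← IHb b' hb']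
      exact nadd_lt_nadd_left hb' a
    · intro a' ha'
      rw [← IHa a' ha' b]
      exact nadd_lt_nadd_right ha' b

theorem nadd_assoc (a b c : Ordinal.{u}) : a ♯ b ♯ c = a ♯ (b ♯ c) := by
  induction a using Ordinal.induction generalizing b c with
  | h a IHa =>
  induction b using Ordinal.induction generalizing c with
  | h b IHb =>
  induction c using Ordinal.induction with
  | h c IHc =>
  apply le_antisymm
  · rw [nadd_le_iff]
    constructor
    · intro x hx
      rcases lt_nadd_iff.1 hx with ⟨a', ha', hxa⟩ | ⟨b', hb', hxb⟩
      · calc x ♯ c ≤ a' ♯ b ♯ c := nadd_le_nadd_right hxa c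
          _ = a' ♯ (b ♯ c) := IHa a' ha' b c
          _ < a ♯ (b ♯ c) := nadd_lt_nadd_right ha' _
      · calc x ♯ c ≤ a ♯ b' ♯ c := nadd_le_nadd_right hxb c
          _ = a ♯ (b' ♯ c) := IHb b' hb' c
          _ < a ♯ (b ♯ c) := nadd_lt_nadd_left (nadd_lt_nadd_right hb' c) a
    · intro c' hc'
      rw [IHc c' hc']
      exact nadd_lt_nadd_left (nadd_lt_nadd_left hc' b) a
  · rw [nadd_le_iff]
    constructor
    · intro a' ha'
      rw [← IHa a' ha' b c]
      exact nadd_lt_nadd_right (nadd_lt_nadd_right ha' b) c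
    · intro y hy
      rcases lt_nadd_iff.1 hy with ⟨b', hb', hyb⟩ | ⟨c', hc', hyc⟩
      · calc a ♯ y ≤ a ♯ (b' ♯ c) := nadd_le_nadd_left hyb a
          _ = a ♯ b' ♯ c := (IHb b' hb' c).symm
          _ < a ♯ b ♯ c := nadd_lt_nadd_right (nadd_lt_nadd_left hb' a) c
      · calc a ♯ y ≤ a ♯ (b ♯ c') := nadd_le_nadd_left hyc a
          _ = a ♯ b ♯ c' := (IHc c' hc').symm
          _ < a ♯ b ♯ c := nadd_lt_nadd_left hc' _

theorem zero_nadd (a : Ordinal.{u}) : 0 ♯ a = a := by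
  induction a using Ordinal.induction with
  | h a IH =>
  apply le_antisymm
  · rw [nadd_le_iff]
    constructor
    · intro b hb
      exact absurd hb (not_lt_zero)
    · intro b hb
      rw [IH b hb]
      exact hb
  · apply le_of_forall_lt
    intro c hc
    rw [← IH c hc]
    exact nadd_lt_nadd_left hc 0

theorem nadd_zero (a : Ordinal.{u}) : a ♯ 0 = a := by
  rw [nadd_comm, zero_nadd]

theorem add_le_nadd (a b : Ordinal.{u}) : a + b ≤ a ♯ b := by
  induction b using Ordinal.induction with
  | h b IH =>
  apply le_of_forall_lt
  intro c hc
  rcases lt_or_ge c a with h1 | h2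
  · calc c < a := h1
      _ = a ♯ 0 := (nadd_zero a).symm
      _ ≤ a ♯ b := nadd_le_nadd_left (zero_le) a
  · have hd : a + (c - a) = c := Ordinal.add_sub_cancel_of_le h2
    have hdb : c - a < b := by
      rw [← hd] at hc
      exact (add_lt_add_iff_left a).1 hc
    calc c = a + (c - a) := hd.symm
      _ ≤ a ♯ (c - a) := IH _ hdb
      _ < a ♯ b := nadd_lt_nadd_left hdb a

def NatOrdinal.{w} : Type (w + 1) := Ordinal.{w}

noncomputable instance : LinearOrder NatOrdinal.{u} := inferInstanceAs (LinearOrder Ordinal.{u})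

noncomputable def toNatOrdinal : Ordinal.{u} ≃o NatOrdinal.{u} := OrderIso.refl _

noncomputable def NatOrdinal.toOrdinal : NatOrdinal.{u} ≃o Ordinal.{u} := OrderIso.refl _

noncomputable instance : Zero NatOrdinal.{u} := ⟨(0 : Ordinal.{u})⟩

noncomputable instance : Add NatOrdinal.{u} := ⟨fun a b => nadd a b⟩

noncomputable instance : AddCommMonoid NatOrdinal.{u} where
  add_assoc a b c := nadd_assoc a b c
  zero_add a := zero_nadd a
  add_zero a := nadd_zero a
  add_comm a b := nadd_comm a b
  nsmul := nsmulRec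

instance : IsOrderedAddMonoid NatOrdinal.{u} where
  add_le_add_left a b h c := nadd_le_nadd_right (a := a) (b := b) h c

instance : AddRightStrictMono NatOrdinal.{u} :=
  ⟨fun c _ _ h => nadd_lt_nadd_right h c⟩

theorem toNatOrdinal_toOrdinal (a : Ordinal.{u}) :
    NatOrdinal.toOrdinal (toNatOrdinal a) = a := rfl

theorem NatOrdinal.toOrdinal_toNatOrdinal (a : NatOrdinal.{u}) :
    toNatOrdinal (NatOrdinal.toOrdinal a) = a := rfl

theorem NatOrdinal.toOrdinal_zero : NatOrdinal.toOrdinal (0 : NatOrdinal.{u}) = 0 := rfl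

theorem nadd_eq_add (a b : Ordinal.{u}) :
    a ♯ b = NatOrdinal.toOrdinal (toNatOrdinal a + toNatOrdinal b) := rfl

theorem NatOrdinal.lt_wf : @WellFounded NatOrdinal.{u} (· < ·) := Ordinal.lt_wf

theorem merge {e : Ordinal} (Hp : ∀ r s : Ordinal, r < ω ^ e → s < ω ^ e → r ♯ s < ω ^ e) :
    ∀ A B : Ordinal, ∀ (m k : ℕ) (r s : Ordinal), r < ω ^ e → s < ω ^ e →
      A = ω ^ e * m + r → B = ω ^ e * k + s →
      A ♯ B = ω ^ e * ((m + k : ℕ) : Ordinal) + (r ♯ s) := by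
  have hω : (ω ^ e) ≠ 0 := (opow_pos e omega0_pos).ne'
  have hωpos : (0:Ordinal) < ω ^ e := opow_pos e omega0_pos
  intro A
  induction A using Ordinal.induction with
  | h A IHA =>
  intro B
  induction B using Ordinal.induction with
  | h B IHB =>
  intro m k r s hr hs hA hB
  apply le_antisymm
  · rw [nadd_le_iff]
    constructor
    · intro A' hA'
      -- decompose A'
      have hA'lt : A' < ω ^ e * ((m:Ordinal) + 1) := by
        rw [mul_add_one]
        exact lt_of_lt_of_le (hA'.trans_le hA.le) (add_le_add_right hr.le _)
      have hdiv : A' / ω ^ e < ((m:Ordinal) + 1) := (Ordinal.div_lt hω).2 hA'lt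
      obtain ⟨m', hm'⟩ : ∃ m' : ℕ, A' / ω ^ e = (m' : Ordinal) :=
        lt_omega0.1 (hdiv.trans_le (by
          have : ((m:Ordinal) + 1) = ((m+1 : ℕ) : Ordinal) := by push_cast; rfl
          rw [this]; exact (nat_lt_omega0 _).le))
      have hm'le : m' ≤ m := by
        have : (m' : Ordinal) < (m : Ordinal) + 1 := hm' ▸ hdiv
        have : (m' : Ordinal) < ((m+1 : ℕ) : Ordinal) := by push_cast at this ⊢; exact this
        exact Nat.lt_succ_iff.1 (Nat.cast_lt.1 this)
      have hr' : A' % ω ^ e < ω ^ e := Ordinal.mod_lt A' hω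
      have hA'eq : A' = ω ^ e * (m' : Ordinal) + A' % ω ^ e := by
        conv_lhs => rw [← Ordinal.div_add_mod A' (ω ^ e)]
        rw [hm']
      have heq := IHA A' hA' B m' k (A' % ω ^ e) s hr' hs hA'eq hB
      rcases lt_or_eq_of_le hm'le with hlt | rfl
      · calc A' ♯ B = ω ^ e * ((m' + k : ℕ) : Ordinal) + (A' % ω ^ e ♯ s) := heq
          _ < ω ^ e * ((m' + k : ℕ) : Ordinal) + ω ^ e :=
              add_lt_add_right (Hp _ _ hr' hs) _
          _ = ω ^ e * ((m' + k + 1 : ℕ) : Ordinal) := by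
              rw [← mul_add_one]; push_cast; rfl
          _ ≤ ω ^ e * ((m + k : ℕ) : Ordinal) :=
              mul_le_mul_right (Nat.cast_le.2 (by omega)) _
          _ ≤ ω ^ e * ((m + k : ℕ) : Ordinal) + (r ♯ s) := le_self_add
      · -- m' = m, so remainder smaller
        have hrlt : A' % ω ^ e < r := by
          have := hA'
          rw [hA'eq, hA] at this
          exact (add_lt_add_iff_left _).1 this
        calc A' ♯ B = ω ^ e * ((m' + k : ℕ) : Ordinal) + (A' % ω ^ e ♯ s) := heq
          _ < ω ^ e * ((m' + k : ℕ) : Ordinal) + (r ♯ s) :=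
              add_lt_add_right (nadd_lt_nadd_right hrlt s) _
    · intro B' hB'
      have hB'lt : B' < ω ^ e * ((k:Ordinal) + 1) := by
        rw [mul_add_one]
        exact lt_of_lt_of_le (hB'.trans_le hB.le) (add_le_add_right hs.le _)
      have hdiv : B' / ω ^ e < ((k:Ordinal) + 1) := (Ordinal.div_lt hω).2 hB'lt
      obtain ⟨k', hk'⟩ : ∃ k' : ℕ, B' / ω ^ e = (k' : Ordinal) :=
        lt_omega0.1 (hdiv.trans_le (by
          have : ((k:Ordinal) + 1) = ((k+1 : ℕ) : Ordinal) := by push_cast; rfl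
          rw [this]; exact (nat_lt_omega0 _).le))
      have hk'le : k' ≤ k := by
        have : (k' : Ordinal) < (k : Ordinal) + 1 := hk' ▸ hdiv
        have : (k' : Ordinal) < ((k+1 : ℕ) : Ordinal) := by push_cast at this ⊢; exact this
        exact Nat.lt_succ_iff.1 (Nat.cast_lt.1 this)
      have hs' : B' % ω ^ e < ω ^ e := Ordinal.mod_lt B' hω
      have hB'eq : B' = ω ^ e * (k' : Ordinal) + B' % ω ^ e := by
        conv_lhs => rw [← Ordinal.div_add_mod B' (ω ^ e)]
        rw [hk']
      have heq := IHB B' hB' m k' r (B' % ω ^ e) hr hs' hA hB'eq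
      rcases lt_or_eq_of_le hk'le with hlt | rfl
      · calc A ♯ B' = ω ^ e * ((m + k' : ℕ) : Ordinal) + (r ♯ (B' % ω ^ e)) := heq
          _ < ω ^ e * ((m + k' : ℕ) : Ordinal) + ω ^ e :=
              add_lt_add_right (Hp _ _ hr hs') _
          _ = ω ^ e * ((m + k' + 1 : ℕ) : Ordinal) := by
              rw [← mul_add_one]; push_cast; rfl
          _ ≤ ω ^ e * ((m + k : ℕ) : Ordinal) :=
              mul_le_mul_right (Nat.cast_le.2 (by omega)) _
          _ ≤ ω ^ e * ((m + k : ℕ) : Ordinal) + (r ♯ s) := le_self_add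
      · have hslt : B' % ω ^ e < s := by
          have := hB'
          rw [hB'eq, hB] at this
          exact (add_lt_add_iff_left _).1 this
        calc A ♯ B' = ω ^ e * ((m + k' : ℕ) : Ordinal) + (r ♯ (B' % ω ^ e)) := heq
          _ < ω ^ e * ((m + k' : ℕ) : Ordinal) + (r ♯ s) :=
              add_lt_add_right (nadd_lt_nadd_left hslt r) _
  · apply le_of_forall_lt
    intro x hx
    rcases lt_or_ge x (ω ^ e * ((m + k : ℕ) : Ordinal)) with h1 | h2
    · have hle : ω ^ e * ((m + k : ℕ) : Ordinal) ≤ A + B := by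
        rw [hA, hB]
        have : ω ^ e * ((m + k : ℕ) : Ordinal) = ω ^ e * (m:Ordinal) + ω ^ e * (k:Ordinal) := by
          push_cast; rw [mul_add]
        rw [this, add_assoc]
        refine add_le_add_right ?_ _
        exact le_add_self |>.trans (add_le_add_right le_self_add r) |>.trans le_rfl
      exact h1.trans_le (hle.trans (add_le_nadd A B))
    · have hxt : ω ^ e * ((m + k : ℕ) : Ordinal) + (x - ω ^ e * ((m + k : ℕ) : Ordinal)) = x :=
        Ordinal.add_sub_cancel_of_le h2
      set t := x - ω ^ e * ((m + k : ℕ) : Ordinal) with htdef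
      have ht : t < r ♯ s := by
        have := hx
        rw [← hxt] at this
        exact (add_lt_add_iff_left _).1 this
      rcases lt_nadd_iff.1 ht with ⟨r', hr'r, htr⟩ | ⟨s', hs's, hts⟩
      · have hA'lt : ω ^ e * (m:Ordinal) + r' < A := by rw [hA]; exact add_lt_add_right hr'r _
        have heq := IHA _ hA'lt B m k r' s (hr'r.trans hr) hs rfl hB
        calc x = ω ^ e * ((m + k : ℕ) : Ordinal) + t := hxt.symm
          _ ≤ ω ^ e * ((m + k : ℕ) : Ordinal) + (r' ♯ s) := add_le_add_right htr _
          _ = (ω ^ e * (m:Ordinal) + r') ♯ B := heq.symm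
          _ < A ♯ B := nadd_lt_nadd_right hA'lt B
      · have hB'lt : ω ^ e * (k:Ordinal) + s' < B := by rw [hB]; exact add_lt_add_right hs's _
        have heq := IHB _ hB'lt m k r s' hr (hs's.trans hs) hA rfl
        calc x = ω ^ e * ((m + k : ℕ) : Ordinal) + t := hxt.symm
          _ ≤ ω ^ e * ((m + k : ℕ) : Ordinal) + (r ♯ s') := add_le_add_right hts _
          _ = A ♯ (ω ^ e * (k:Ordinal) + s') := heq.symm
          _ < A ♯ B := nadd_lt_nadd_left hB'lt A

theorem nadd_lt_omega0_opow {c : Ordinal} :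
    ∀ a b, a < ω ^ c → b < ω ^ c → a ♯ b < ω ^ c := by
  induction c using Ordinal.induction with
  | h c IH =>
  intro a b ha hb
  rcases eq_or_ne a 0 with rfl | ha0
  · rwa [zero_nadd]
  rcases eq_or_ne b 0 with rfl | hb0
  · rwa [nadd_zero]
  have hM0 : a ⊔ b ≠ 0 := by
    intro h
    exact ha0 (le_antisymm (le_sup_left.trans h.le) (zero_le))
  have hMlt : a ⊔ b < ω ^ c := max_lt ha hb
  have he : log ω (a ⊔ b) < c := (lt_opow_iff_log_lt one_lt_omega0 hM0).1 hMlt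
  set e := log ω (a ⊔ b) with hedef
  have hω : (ω ^ e) ≠ 0 := (opow_pos e omega0_pos).ne'
  have hsucc : ω ^ (e+1) = ω ^ e * ω := by rw [add_one_eq_succ, opow_succ]
  have ha' : a < ω ^ e * ω := by
    rw [← hsucc, add_one_eq_succ]
    exact le_sup_left.trans_lt (lt_opow_succ_log_self one_lt_omega0 _)
  have hb' : b < ω ^ e * ω := by
    rw [← hsucc, add_one_eq_succ]
    exact le_sup_right.trans_lt (lt_opow_succ_log_self one_lt_omega0 _)
  have Hp : ∀ r s : Ordinal, r < ω ^ e → s < ω ^ e → r ♯ s < ω ^ e :=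
    fun r s hr hs => IH e he r s hr hs
  obtain ⟨m, hm⟩ : ∃ m : ℕ, a / ω ^ e = (m : Ordinal) :=
    lt_omega0.1 ((Ordinal.div_lt hω).2 ha')
  obtain ⟨k, hk⟩ : ∃ k : ℕ, b / ω ^ e = (k : Ordinal) :=
    lt_omega0.1 ((Ordinal.div_lt hω).2 hb')
  have hAeq : a = ω ^ e * (m : Ordinal) + a % ω ^ e := by
    conv_lhs => rw [← Ordinal.div_add_mod a (ω ^ e)]
    rw [hm]
  have hBeq : b = ω ^ e * (k : Ordinal) + b % ω ^ e := by
    conv_lhs => rw [← Ordinal.div_add_mod b (ω ^ e)]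
    rw [hk]
  have hmain := merge Hp a b m k _ _ (Ordinal.mod_lt a hω) (Ordinal.mod_lt b hω) hAeq hBeq
  have hlt : a ♯ b < ω ^ e * ((m + k + 1 : ℕ) : Ordinal) := by
    rw [hmain]
    calc ω ^ e * ((m + k : ℕ) : Ordinal) + (a % ω ^ e ♯ b % ω ^ e)
        < ω ^ e * ((m + k : ℕ) : Ordinal) + ω ^ e :=
          add_lt_add_right (Hp _ _ (Ordinal.mod_lt a hω) (Ordinal.mod_lt b hω)) _
      _ = ω ^ e * ((m + k + 1 : ℕ) : Ordinal) := by rw [← mul_add_one]; push_cast; rfl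
  refine hlt.trans_le ?_
  calc ω ^ e * ((m + k + 1 : ℕ) : Ordinal) ≤ ω ^ e * ω :=
        mul_le_mul_right (nat_lt_omega0 _).le _
    _ = ω ^ (e+1) := hsucc.symm
    _ ≤ ω ^ c := opow_le_opow_right omega0_pos (by
        rw [add_one_eq_succ]; exact Order.succ_le_of_lt he)


variable {X : Type u} [PartialOrder X]

/-- The strict Dershowitz–Manna relation. -/
abbrev MRel (X : Type u) [PartialOrder X] : Multiset X → Multiset X → Prop :=
  fun m m' => MulDM (· < ·) m m' ∧ m ≠ m'

theorem MRel.cond {m m' : Multiset X} (h : MRel X m m') :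
    ∀ x ∈ m - m ∩ m', ∃ y ∈ m' - m ∩ m', x < y :=
  h.1.resolve_left h.2

theorem MRel.intro {m m' : Multiset X} (hne : m ≠ m')
    (h : ∀ x ∈ m - m ∩ m', ∃ y ∈ m' - m ∩ m', x < y) : MRel X m m' :=
  ⟨Or.inr h, hne⟩

theorem add_inter_add (m k k' : Multiset X) : (m + k) ∩ (m + k') = m + k ∩ k' := by
  ext a
  simp only [Multiset.count_inter, Multiset.count_add]
  omega

theorem inter_add_self (m k : Multiset X) : m ∩ (m + k) = m := by
  ext a
  simp only [Multiset.count_inter, Multiset.count_add]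
  omega

theorem dm_zero {m : Multiset X} (hm : m ≠ 0) : MRel X 0 m := by
  refine MRel.intro (fun h => hm h.symm) ?_
  intro x hx
  simp at hx

theorem dm_add_left {k k' : Multiset X} (m : Multiset X) (h : MRel X k k') :
    MRel X (m + k) (m + k') := by
  refine MRel.intro (fun hh => h.2 (add_left_cancel hh)) ?_
  rw [add_inter_add, add_tsub_add_eq_tsub_left, add_tsub_add_eq_tsub_left]
  exact h.cond

theorem dm_lt_add {k : Multiset X} (m : Multiset X) (hk : k ≠ 0) : MRel X m (m + k) := by
  refine MRel.intro (fun hh => hk (by simpa using hh.symm)) ?_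
  rw [inter_add_self, tsub_self]
  intro x hx
  simp at hx

theorem dm_replicate_single {y x : X} (hyx : y < x) (n : ℕ) :
    MRel X (Multiset.replicate n y) {x} := by
  have hne : y ≠ x := ne_of_lt hyx
  have hint : Multiset.replicate n y ∩ {x} = 0 := by
    ext a
    rw [Multiset.count_inter, Multiset.count_replicate, Multiset.count_singleton,
      Multiset.count_zero]
    rcases eq_or_ne a y with rfl | hay
    · rw [if_pos rfl, if_neg hne]
      exact Nat.min_zero n
    · rw [if_neg (fun h => hay h.symm)]
      exact Nat.zero_min _
  refine MRel.intro ?_ ?_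
  · intro h
    have : x ∈ Multiset.replicate n y := h ▸ Multiset.mem_singleton_self x
    exact hne (Multiset.eq_of_mem_replicate this).symm
  · rw [hint, tsub_zero, tsub_zero]
    intro z hz
    rw [Multiset.eq_of_mem_replicate hz]
    exact ⟨x, Multiset.mem_singleton_self x, hyx⟩

theorem exists_max {α : Type v} (g : α → Ordinal) :
    ∀ s : Multiset α, s ≠ 0 → ∃ a ∈ s, ∀ b ∈ s, g b ≤ g a := by
  intro s
  induction s using Multiset.induction with
  | empty => intro h; exact absurd rfl h
  | cons a s IH =>
    intro _
    rcases eq_or_ne s 0 with rfl | hs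
    · exact ⟨a, Multiset.mem_cons_self a 0, by
        intro b hb
        rw [Multiset.mem_cons] at hb
        rcases hb with rfl | hb
        · exact le_rfl
        · simp at hb⟩
    · obtain ⟨c, hc, hmax⟩ := IH hs
      rcases le_total (g c) (g a) with hca | hac
      · refine ⟨a, Multiset.mem_cons_self a s, ?_⟩
        intro b hb
        rw [Multiset.mem_cons] at hb
        rcases hb with rfl | hb
        · exact le_rfl
        · exact (hmax b hb).trans hca
      · refine ⟨c, Multiset.mem_cons_of_mem hc, ?_⟩
        intro b hb
        rw [Multiset.mem_cons] at hb
        rcases hb with rfl | hb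
        · exact hac
        · exact hmax b hb


/-! ### The measure function -/

variable (hwf : WellFounded ((· < ·) : X → X → Prop))

noncomputable def fm (m : Multiset X) : NatOrdinal :=
  (m.map fun x => toNatOrdinal (ω ^ hwf.rank x)).sum

theorem fm_add (m k : Multiset X) : fm hwf (m + k) = fm hwf m + fm hwf k := by
  simp [fm, Multiset.sum_add]

theorem fm_lt_opow (m : Multiset X) (β : Ordinal)
    (hm : ∀ x ∈ m, hwf.rank x < β) :
    NatOrdinal.toOrdinal (fm hwf m) < ω ^ β := by
  induction m using Multiset.induction with
  | empty =>
    simp only [fm, Multiset.map_zero, Multiset.sum_zero]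
    rw [show ((0 : NatOrdinal)) = toNatOrdinal 0 from rfl, toNatOrdinal_toOrdinal]
    exact opow_pos β omega0_pos
  | cons a s IH =>
    have h1 : fm hwf (a ::ₘ s) = toNatOrdinal (ω ^ hwf.rank a) + fm hwf s := by
      simp [fm]
    have h2 : NatOrdinal.toOrdinal (fm hwf (a ::ₘ s))
        = (ω ^ hwf.rank a) ♯ NatOrdinal.toOrdinal (fm hwf s) := by
      rw [h1, nadd_eq_add, NatOrdinal.toOrdinal_toNatOrdinal]
    rw [h2]
    exact nadd_lt_omega0_opow _ _ (opow_lt_opow_iff_right one_lt_omega0 |>.2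
        (hm a (Multiset.mem_cons_self a s)))
      (IH fun x hx => hm x (Multiset.mem_cons_of_mem hx))

theorem le_fm {y : X} {m : Multiset X} (hy : y ∈ m) :
    ω ^ hwf.rank y ≤ NatOrdinal.toOrdinal (fm hwf m) := by
  have h0 : ∀ z ∈ m.map fun x => toNatOrdinal (ω ^ hwf.rank x), (0 : NatOrdinal) ≤ z :=
    fun z _ => by
      rw [← NatOrdinal.toOrdinal.le_iff_le, NatOrdinal.toOrdinal_zero]
      exact zero_le
  have h1 : toNatOrdinal (ω ^ hwf.rank y) ≤ fm hwf m :=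
    Multiset.single_le_sum h0 _ (Multiset.mem_map_of_mem _ hy)
  have h2 := NatOrdinal.toOrdinal.le_iff_le.2 h1
  rwa [toNatOrdinal_toOrdinal] at h2

theorem fm_strictMono {m m' : Multiset X} (h : MRel X m m') : fm hwf m < fm hwf m' := by
  set n := m ∩ m' with hn
  have h1 : m - n + n = m := tsub_add_cancel_of_le ((Multiset.inter_le_left (s := m) (t := m')))
  have h2 : m' - n + n = m' := tsub_add_cancel_of_le ((Multiset.inter_le_right (s := m) (t := m')))
  have hne : m' - n ≠ 0 := by
    intro h0
    have hm'n : m' = n := le_antisymm (tsub_eq_zero_iff_le.1 h0) ((Multiset.inter_le_right (s := m) (t := m')))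
    have hmn : m - n = 0 := by
      rw [Multiset.eq_zero_iff_forall_notMem]
      intro x hx
      obtain ⟨y, hy, -⟩ := h.cond x hx
      rw [h0] at hy
      simp at hy
    have : m = n := le_antisymm (tsub_eq_zero_iff_le.1 hmn) ((Multiset.inter_le_left (s := m) (t := m')))
    exact h.2 (this.trans hm'n.symm)
  obtain ⟨y0, hy0, hmax⟩ := exists_max (fun x => hwf.rank x) (m' - n) hne
  have key : NatOrdinal.toOrdinal (fm hwf (m - n)) < NatOrdinal.toOrdinal (fm hwf (m' - n)) := by
    refine lt_of_lt_of_le (fm_lt_opow hwf (m - n) (hwf.rank y0) ?_) (le_fm hwf hy0)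
    intro x hx
    obtain ⟨y, hy, hxy⟩ := h.cond x hx
    exact (hwf.rank_lt_of_rel hxy).trans_le (hmax y hy)
  have key' : fm hwf (m - n) < fm hwf (m' - n) := NatOrdinal.toOrdinal.lt_iff_lt.1 key
  calc fm hwf m = fm hwf (m - n) + fm hwf n := by rw [← fm_add, h1]
    _ < fm hwf (m' - n) + fm hwf n := add_lt_add_left key' _
    _ = fm hwf m' := by rw [← fm_add, h2]

include hwf in
theorem mwf : WellFounded (MRel X) :=
  Subrelation.wf (fun h => fm_strictMono hwf h) (InvImage.wf (fm hwf) NatOrdinal.lt_wf)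

/-! ### Rank estimates -/

theorem rank_le_fm (hMwf : WellFounded (MRel X)) :
    ∀ m, hMwf.rank m ≤ NatOrdinal.toOrdinal (fm hwf m) := by
  intro m
  refine WellFounded.induction
    (C := fun m => hMwf.rank m ≤ NatOrdinal.toOrdinal (fm hwf m)) hMwf m ?_
  intro m IH
  rw [hMwf.rank_eq]
  refine Ordinal.iSup_le fun b => ?_
  refine Order.succ_le_of_lt (lt_of_le_of_lt (IH b b.2) ?_)
  exact NatOrdinal.toOrdinal.lt_iff_lt.2 (fm_strictMono hwf b.2)

theorem not_mrel_zero (b : Multiset X) : ¬ MRel X b 0 := by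
  intro h
  rcases eq_or_ne b 0 with rfl | hb
  · exact h.2 rfl
  · obtain ⟨x, hx⟩ := Multiset.exists_mem_of_ne_zero hb
    have hx' : x ∈ b - b ∩ 0 := by rwa [Multiset.inter_zero, tsub_zero]
    obtain ⟨y, hy, -⟩ := h.cond x hx'
    simp at hy

theorem rank_zero (hMwf : WellFounded (MRel X)) : hMwf.rank (0 : Multiset X) = 0 := by
  rw [hMwf.rank_eq]
  have : IsEmpty {b : Multiset X // MRel X b 0} := ⟨fun ⟨b, hb⟩ => not_mrel_zero b hb⟩
  rw [ciSup_of_empty]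
  exact Ordinal.bot_eq_zero

theorem rank_add_le (hMwf : WellFounded (MRel X)) :
    ∀ k m : Multiset X, hMwf.rank m + hMwf.rank k ≤ hMwf.rank (m + k) := by
  intro k
  refine WellFounded.induction
    (C := fun k => ∀ m : Multiset X, hMwf.rank m + hMwf.rank k ≤ hMwf.rank (m + k)) hMwf k ?_
  intro k IH m
  rcases eq_or_ne k 0 with rfl | hk
  · rw [rank_zero hMwf, add_zero, add_zero]
  · apply le_of_forall_lt
    intro c hc
    rcases lt_or_ge c (hMwf.rank m) with h1 | h2
    · exact h1.trans (hMwf.rank_lt_of_rel (dm_lt_add m hk))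
    · have hd : hMwf.rank m + (c - hMwf.rank m) = c := Ordinal.add_sub_cancel_of_le h2
      have hdlt : c - hMwf.rank m < hMwf.rank k := by
        by_contra hcon
        push_neg at hcon
        have := add_le_add_right hcon (hMwf.rank m)
        rw [hd] at this
        exact absurd hc (not_lt.2 this)
      rw [hMwf.rank_eq (a := k), Ordinal.lt_iSup_iff] at hdlt
      obtain ⟨⟨k', hk'⟩, hdk⟩ := hdlt
      have hdle : c - hMwf.rank m ≤ hMwf.rank k' := Order.lt_succ_iff.1 hdk
      calc c = hMwf.rank m + (c - hMwf.rank m) := hd.symm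
        _ ≤ hMwf.rank m + hMwf.rank k' := add_le_add_right hdle _
        _ ≤ hMwf.rank (m + k') := IH k' hk' m
        _ < hMwf.rank (m + k) := hMwf.rank_lt_of_rel (dm_add_left m hk')

theorem rank_replicate (hMwf : WellFounded (MRel X)) {y : X}
    (hy : ω ^ hwf.rank y ≤ hMwf.rank ({y} : Multiset X)) :
    ∀ n : ℕ, ω ^ hwf.rank y * (n : Ordinal) ≤ hMwf.rank (Multiset.replicate n y) := by
  intro n
  induction n with
  | zero => simp
  | succ n IH =>
    have h1 : Multiset.replicate n y + {y} = Multiset.replicate (n + 1) y := by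
      rw [Multiset.replicate_succ, add_comm, Multiset.singleton_add]
    calc ω ^ hwf.rank y * ((n + 1 : ℕ) : Ordinal)
        = ω ^ hwf.rank y * (n : Ordinal) + ω ^ hwf.rank y := by push_cast; rw [mul_add_one]
      _ ≤ hMwf.rank (Multiset.replicate n y) + hMwf.rank ({y} : Multiset X) := add_le_add IH hy
      _ ≤ hMwf.rank (Multiset.replicate n y + {y}) := rank_add_le hMwf _ _
      _ = hMwf.rank (Multiset.replicate (n + 1) y) := by rw [h1]

theorem rank_singleton (hMwf : WellFounded (MRel X)) :
    ∀ x : X, ω ^ hwf.rank x ≤ hMwf.rank ({x} : Multiset X) := by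
  intro x
  refine WellFounded.induction
    (C := fun x => ω ^ hwf.rank x ≤ hMwf.rank ({x} : Multiset X)) hwf x ?_
  intro x IH
  have hpos : 0 < hMwf.rank ({x} : Multiset X) :=
    lt_of_le_of_lt (zero_le)
      (hMwf.rank_lt_of_rel (dm_zero (Multiset.singleton_ne_zero x)))
  apply le_of_forall_lt
  intro β hβ
  rcases eq_or_ne β 0 with rfl | hβ0
  · exact hpos
  · have he : log ω β < hwf.rank x := (lt_opow_iff_log_lt one_lt_omega0 hβ0).1 hβ
    set e := log ω β with hedef
    have hω : (ω ^ e) ≠ 0 := (opow_pos e omega0_pos).ne'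
    have hβe : β < ω ^ e * ω := by
      rw [← opow_succ]
      exact lt_opow_succ_log_self one_lt_omega0 β
    obtain ⟨n, hn⟩ : ∃ n : ℕ, β / ω ^ e = (n : Ordinal) :=
      lt_omega0.1 ((Ordinal.div_lt hω).2 hβe)
    have hβlt : β < ω ^ e * ((n + 1 : ℕ) : Ordinal) := by
      conv_lhs => rw [← Ordinal.div_add_mod β (ω ^ e)]
      rw [hn]
      push_cast
      rw [mul_add_one]
      exact add_lt_add_right (Ordinal.mod_lt β hω) _
    rw [hwf.rank_eq, Ordinal.lt_iSup_iff] at he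
    obtain ⟨⟨y, hyx⟩, hey⟩ := he
    have hey' : e ≤ hwf.rank y := Order.lt_succ_iff.1 hey
    calc β < ω ^ e * ((n + 1 : ℕ) : Ordinal) := hβlt
      _ ≤ ω ^ hwf.rank y * ((n + 1 : ℕ) : Ordinal) :=
          mul_le_mul_left (opow_le_opow_right omega0_pos hey') _
      _ ≤ hMwf.rank (Multiset.replicate (n + 1) y) := rank_replicate hwf hMwf (IH y hyx) (n + 1)
      _ < hMwf.rank ({x} : Multiset X) := hMwf.rank_lt_of_rel (dm_replicate_single hyx (n + 1))

end Stmt15Aux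
end


set_option maxHeartbeats 1000000 in
theorem stmt15 (X : Type*) [PartialOrder X]
    (hX : IsWqo ((· ≤ ·) : X → X → Prop)) :
    heightOrd (fun m m' : Multiset X => MulDM (· < ·) m m' ∧ m ≠ m') =
      ω ^ heightOrd ((· < ·) : X → X → Prop) := by
  have hwf : WellFounded ((· < ·) : X → X → Prop) := by
    rw [RelEmbedding.wellFounded_iff_isEmpty]
    constructor
    intro g
    have hanti : StrictAnti (fun n : ℕ => g n) :=
      strictAnti_nat_of_succ_lt fun n => g.map_rel_iff.2 (Nat.lt_succ_self n)
    obtain ⟨i, j, hij, hle⟩ := hX fun n => g n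
    exact absurd hle (hanti hij).not_ge
  have hMwf : WellFounded (fun m m' : Multiset X => MulDM (· < ·) m m' ∧ m ≠ m') :=
    Stmt15Aux.mwf hwf
  unfold heightOrd
  rw [dif_pos hMwf, dif_pos hwf]
  apply le_antisymm
  · refine Ordinal.iSup_le fun m => ?_
    refine Order.succ_le_of_lt (lt_of_le_of_lt (Stmt15Aux.rank_le_fm hwf hMwf m) ?_)
    refine Stmt15Aux.fm_lt_opow hwf m _ fun x _ => ?_
    exact Order.succ_le_iff.1 (Ordinal.le_iSup (fun x : X => Order.succ (hwf.rank x)) x)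
  · apply le_of_forall_lt
    intro β hβ
    rw [Ordinal.lt_iSup_iff]
    rcases eq_or_ne β 0 with rfl | hβ0
    · exact ⟨0, Order.lt_succ_iff.2 (zero_le)⟩
    · have he : log ω β < ⨆ x : X, Order.succ (hwf.rank x) :=
        (lt_opow_iff_log_lt one_lt_omega0 hβ0).1 hβ
      rw [Ordinal.lt_iSup_iff] at he
      obtain ⟨x, hex⟩ := he
      have hex' : log ω β ≤ hwf.rank x := Order.lt_succ_iff.1 hex
      have hω : (ω ^ log ω β) ≠ 0 := (opow_pos _ omega0_pos).ne'
      have hβe : β < ω ^ log ω β * ω := by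
        rw [← opow_succ]; exact lt_opow_succ_log_self one_lt_omega0 β
      obtain ⟨n, hn⟩ : ∃ n : ℕ, β / ω ^ log ω β = (n : Ordinal) :=
        lt_omega0.1 ((Ordinal.div_lt hω).2 hβe)
      have hβlt : β < ω ^ log ω β * ((n + 1 : ℕ) : Ordinal) := by
        conv_lhs => rw [← Ordinal.div_add_mod β (ω ^ log ω β)]
        rw [hn]; push_cast; rw [mul_add_one]
        exact add_lt_add_right (Ordinal.mod_lt β hω) _
      refine ⟨Multiset.replicate (n + 1) x, Order.lt_succ_iff.2 (le_of_lt ?_)⟩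
      calc β < ω ^ log ω β * ((n + 1 : ℕ) : Ordinal) := hβlt
        _ ≤ ω ^ hwf.rank x * ((n + 1 : ℕ) : Ordinal) :=
            mul_le_mul_left (opow_le_opow_right omega0_pos hex') _
        _ ≤ hMwf.rank (Multiset.replicate (n + 1) x) :=
            Stmt15Aux.rank_replicate hwf hMwf (Stmt15Aux.rank_singleton hwf hMwf x) (n + 1)
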